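/- arXiv:1212.3970 — 3 statements merged into one kernel-verified Lean document; each statement's English description precedes it below -/
import Mathlib

section
/- s(K) = 1 (i.e., there exists an m×1 integer matrix satisfying condition (A) for K but no m×2 integer matrix satisfying condition (A) for K) if and only if N(K) ≠ ∅ and any two elements of N(K) have nonempty intersection and any three elements of N(K) have nonempty common intersection (elements not necessarily distinct). -/
/-- `K` is an abstract simplicial complex on the vertex set `[m]`:
it contains the empty set and is closed under taking subsets. -/
def IsSimplicialComplex (m : ℕ) (K : Set (Finset (Fin m))) : Prop :=
  ∅ ∈ K ∧ ∀ σ ∈ K, ∀ τ ⊆ σ, τ ∈ K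

/-- `ω` is a minimal non-simplex of `K`: `ω ∉ K` but every proper subset of `ω` is in `K`. -/
def MinimalNonSimplex (m : ℕ) (K : Set (Finset (Fin m))) (ω : Finset (Fin m)) : Prop :=
  ω ∉ K ∧ ∀ τ ⊂ ω, τ ∈ K

/-- Condition (A): for every simplex `σ ∈ K` the rows `{Sⁱ : i ∉ σ}`
generate `ℤᵏ` as an abelian group. -/
def CondA (m k : ℕ) (K : Set (Finset (Fin m))) (S : Matrix (Fin m) (Fin k) ℤ) : Prop :=
  ∀ σ ∈ K, Submodule.span ℤ ((fun i => S i) '' {i : Fin m | i ∉ σ}) = ⊤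

/-- Condition (A2): for every simplex `σ ∈ K` the rows `{Sⁱ : i ∉ σ}` span `𝔽₂ᵏ`. -/
def CondA2 (m k : ℕ) (K : Set (Finset (Fin m))) (S : Matrix (Fin m) (Fin k) (ZMod 2)) : Prop :=
  ∀ σ ∈ K, Submodule.span (ZMod 2) ((fun i => S i) '' {i : Fin m | i ∉ σ}) = ⊤

/-!
Under condition (A), a nonzero ℤ-linear functional `φ` on `ℤᵏ` cannot vanish on all rows outside
a simplex, so its support `{i | φ (Sⁱ) ≠ 0}` is a non-simplex and contains a minimal one. For
`k = 1` this gives `N(K) ≠ ∅`; for `k = 2` the three nonzero functionals `ℤ² → 𝔽₂` satisfy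
`φ₁ + φ₂ = φ₃`, so their supports have empty common intersection.

Conversely, a simplex misses a vertex of every minimal non-simplex. Hence if `N(K) ≠ ∅` the
all-ones column satisfies (A), and three minimal non-simplices `ω₁, ω₂, ω₃` with empty common
intersection yield the rows `e₁` off `ω₁`, `e₂` on `ω₁ \ ω₂` and `e₁ + e₂` on `ω₁ ∩ ω₂`: outside
any simplex two of these rows form a basis of `ℤ²`.
-/

section

variable {m : ℕ} {K : Set (Finset (Fin m))}

theorem exists_minimalNonSimplex_subset {s : Finset (Fin m)} (hs : s ∉ K) :
    ∃ ω ⊆ s, MinimalNonSimplex m K ω := by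
  induction s using Finset.strongInduction with
  | H s ih =>
    by_cases h : ∀ τ ⊂ s, τ ∈ K
    · exact ⟨s, subset_rfl, hs, h⟩
    · push Not at h
      obtain ⟨τ, hτs, hτ⟩ := h
      obtain ⟨ω, hωτ, hω⟩ := ih τ hτs hτ
      exact ⟨ω, hωτ.trans hτs.subset, hω⟩

theorem IsSimplicialComplex.exists_mem_notMem_of_notMem (hK : IsSimplicialComplex m K)
    {σ ω : Finset (Fin m)} (hσ : σ ∈ K) (hω : ω ∉ K) : ∃ a ∈ ω, a ∉ σ :=
  Finset.not_subset.mp fun h => hω (hK.2 σ hσ ω h)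

theorem CondA.exists_apply_ne_zero {k : ℕ} {S : Matrix (Fin m) (Fin k) ℤ} (hA : CondA m k K S)
    {M : Type*} [AddCommGroup M] (φ : (Fin k → ℤ) →ₗ[ℤ] M) (hφ : φ ≠ 0)
    {σ : Finset (Fin m)} (hσ : σ ∈ K) : ∃ i ∉ σ, φ (S i) ≠ 0 := by
  by_contra! h
  have hle : Submodule.span ℤ ((fun i => S i) '' {i : Fin m | i ∉ σ}) ≤ LinearMap.ker φ :=
    Submodule.span_le.2 (by rintro _ ⟨i, hi, rfl⟩; exact h i hi)
  rw [hA σ hσ, top_le_iff, LinearMap.ker_eq_top] at hle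
  exact hφ hle

theorem CondA.exists_minimalNonSimplex_forall_apply_ne_zero {k : ℕ}
    {S : Matrix (Fin m) (Fin k) ℤ} (hA : CondA m k K S)
    {M : Type*} [AddCommGroup M] (φ : (Fin k → ℤ) →ₗ[ℤ] M) (hφ : φ ≠ 0) :
    ∃ ω, MinimalNonSimplex m K ω ∧ ∀ i ∈ ω, φ (S i) ≠ 0 := by
  classical
  set support := Finset.univ.filter fun i => φ (S i) ≠ 0
  have hsupport : support ∉ K := fun h => by
    obtain ⟨i, hi, hφi⟩ := hA.exists_apply_ne_zero φ hφ h
    exact hi (by simpa [support] using hφi)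
  obtain ⟨ω, hω_sub, hω⟩ := exists_minimalNonSimplex_subset hsupport
  exact ⟨ω, hω, fun i hi => by simpa [support] using hω_sub hi⟩

theorem Submodule.eq_top_of_det_eq_one (p : Submodule ℤ (Fin 2 → ℤ)) {u v : Fin 2 → ℤ}
    (hu : u ∈ p) (hv : v ∈ p) (hdet : u 0 * v 1 - u 1 * v 0 = 1) : p = ⊤ := by
  refine eq_top_iff.2 fun x _ => ?_
  have hx : x = (x 0 * v 1 - x 1 * v 0) • u + (u 0 * x 1 - u 1 * x 0) • v := by
    funext j
    fin_cases j <;> simp <;> linear_combination (-x _) * hdet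
  rw [hx]
  exact p.add_mem (p.smul_mem _ hu) (p.smul_mem _ hv)

theorem condA_of_forall_exists_det_eq_one {S : Matrix (Fin m) (Fin 2) ℤ}
    (h : ∀ σ ∈ K, ∃ a ∉ σ, ∃ b ∉ σ, S a 0 * S b 1 - S a 1 * S b 0 = 1) : CondA m 2 K S := by
  intro σ hσ
  obtain ⟨a, ha, b, hb, hdet⟩ := h σ hσ
  exact Submodule.eq_top_of_det_eq_one _ (Submodule.subset_span ⟨a, ha, rfl⟩)
    (Submodule.subset_span ⟨b, hb, rfl⟩) hdet

theorem exists_condA_one_iff (hK : IsSimplicialComplex m K) :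
    (∃ S : Matrix (Fin m) (Fin 1) ℤ, CondA m 1 K S) ↔ ∃ ω, MinimalNonSimplex m K ω := by
  constructor
  · rintro ⟨S, hS⟩
    have hφ : (LinearMap.proj 0 : (Fin 1 → ℤ) →ₗ[ℤ] ℤ) ≠ 0 := fun h => by
      simpa using LinearMap.congr_fun h 1
    obtain ⟨ω, hω, -⟩ := hS.exists_minimalNonSimplex_forall_apply_ne_zero _ hφ
    exact ⟨ω, hω⟩
  · rintro ⟨ω, hω⟩
    refine ⟨fun _ => 1, fun σ hσ => eq_top_iff.2 fun x _ => ?_⟩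
    obtain ⟨a, -, ha⟩ := hK.exists_mem_notMem_of_notMem hσ hω.1
    have hx : x = x 0 • (1 : Fin 1 → ℤ) := by
      funext j
      fin_cases j
      simp
    rw [hx]
    exact Submodule.smul_mem _ _ (Submodule.subset_span ⟨a, ha, rfl⟩)

theorem exists_condA_two_of_inter_eq_empty (hK : IsSimplicialComplex m K)
    {ω₁ ω₂ ω₃ : Finset (Fin m)} (h₁ : ω₁ ∉ K) (h₂ : ω₂ ∉ K) (h₃ : ω₃ ∉ K)
    (hempty : ω₁ ∩ ω₂ ∩ ω₃ = ∅) : ∃ S : Matrix (Fin m) (Fin 2) ℤ, CondA m 2 K S := by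
  classical
  refine ⟨fun i => if i ∈ ω₁ then (if i ∈ ω₂ then ![1, 1] else ![0, 1]) else ![1, 0],
    condA_of_forall_exists_det_eq_one fun σ hσ => ?_⟩
  obtain ⟨a₁, ha₁, ha₁σ⟩ := hK.exists_mem_notMem_of_notMem hσ h₁
  obtain ⟨a₂, ha₂, ha₂σ⟩ := hK.exists_mem_notMem_of_notMem hσ h₂
  obtain ⟨a₃, ha₃, ha₃σ⟩ := hK.exists_mem_notMem_of_notMem hσ h₃
  have ha₃' : a₃ ∉ ω₁ ∩ ω₂ := fun h => by
    simpa [hempty] using Finset.mem_inter.2 ⟨h, ha₃⟩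
  by_cases h₃₁ : a₃ ∈ ω₁
  · have h₃₂ : a₃ ∉ ω₂ := fun h => ha₃' (Finset.mem_inter.2 ⟨h₃₁, h⟩)
    refine ⟨a₂, ha₂σ, a₃, ha₃σ, ?_⟩
    by_cases h₂₁ : a₂ ∈ ω₁ <;> simp [ha₂, h₂₁, h₃₁, h₃₂]
  · refine ⟨a₃, ha₃σ, a₁, ha₁σ, ?_⟩
    by_cases h₁₂ : a₁ ∈ ω₂ <;> simp [ha₁, h₁₂, h₃₁]

theorem CondA.exists_minimalNonSimplex_inter_eq_empty {S : Matrix (Fin m) (Fin 2) ℤ}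
    (hA : CondA m 2 K S) :
    ∃ ω₁ ω₂ ω₃, MinimalNonSimplex m K ω₁ ∧ MinimalNonSimplex m K ω₂ ∧
      MinimalNonSimplex m K ω₃ ∧ ω₁ ∩ ω₂ ∩ ω₃ = ∅ := by
  let φ : Fin 2 → (Fin 2 → ℤ) →ₗ[ℤ] ZMod 2 := fun j =>
    (Int.castAddHom (ZMod 2)).toIntLinearMap ∘ₗ LinearMap.proj j
  have hφ₀ : φ 0 ≠ 0 := fun h => by simpa [φ] using LinearMap.congr_fun h (Pi.single 0 1)
  have hφ₁ : φ 1 ≠ 0 := fun h => by simpa [φ] using LinearMap.congr_fun h (Pi.single 1 1)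
  have hφ₂ : φ 0 + φ 1 ≠ 0 := fun h => by simpa [φ] using LinearMap.congr_fun h (Pi.single 0 1)
  obtain ⟨ω₁, h₁, hω₁⟩ := hA.exists_minimalNonSimplex_forall_apply_ne_zero _ hφ₀
  obtain ⟨ω₂, h₂, hω₂⟩ := hA.exists_minimalNonSimplex_forall_apply_ne_zero _ hφ₁
  obtain ⟨ω₃, h₃, hω₃⟩ := hA.exists_minimalNonSimplex_forall_apply_ne_zero _ hφ₂
  refine ⟨ω₁, ω₂, ω₃, h₁, h₂, h₃, Finset.eq_empty_of_forall_notMem fun i hi => ?_⟩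
  simp only [Finset.mem_inter] at hi
  have add_eq_zero : ∀ a b : ZMod 2, a ≠ 0 → b ≠ 0 → a + b = 0 := by decide
  exact hω₃ i hi.2 (add_eq_zero _ _ (hω₁ i hi.1.1) (hω₂ i hi.1.2))

theorem exists_condA_two_iff (hK : IsSimplicialComplex m K) :
    (∃ S : Matrix (Fin m) (Fin 2) ℤ, CondA m 2 K S) ↔
      ∃ ω₁ ω₂ ω₃, MinimalNonSimplex m K ω₁ ∧ MinimalNonSimplex m K ω₂ ∧
        MinimalNonSimplex m K ω₃ ∧ ω₁ ∩ ω₂ ∩ ω₃ = ∅ :=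
  ⟨fun ⟨_, hS⟩ => hS.exists_minimalNonSimplex_inter_eq_empty,
    fun ⟨_, _, _, h₁, h₂, h₃, hempty⟩ =>
      exists_condA_two_of_inter_eq_empty hK h₁.1 h₂.1 h₃.1 hempty⟩

end

/-- `s(K) = 1` iff `N(K) ≠ ∅` and any two and any three (not necessarily distinct)
elements of `N(K)` have nonempty (common) intersection. -/
theorem stmt_16 (m : ℕ) (K : Set (Finset (Fin m))) (hK : IsSimplicialComplex m K) :
    ((∃ S : Matrix (Fin m) (Fin 1) ℤ, CondA m 1 K S) ∧
      ¬(∃ S : Matrix (Fin m) (Fin 2) ℤ, CondA m 2 K S)) ↔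
      ((∃ ω : Finset (Fin m), MinimalNonSimplex m K ω) ∧
        (∀ τ₁ τ₂ : Finset (Fin m), MinimalNonSimplex m K τ₁ → MinimalNonSimplex m K τ₂ →
          (τ₁ ∩ τ₂).Nonempty) ∧
        (∀ τ₁ τ₂ τ₃ : Finset (Fin m), MinimalNonSimplex m K τ₁ → MinimalNonSimplex m K τ₂ →
          MinimalNonSimplex m K τ₃ → (τ₁ ∩ τ₂ ∩ τ₃).Nonempty)) := by
  rw [exists_condA_one_iff hK, exists_condA_two_iff hK]
  constructor
  · rintro ⟨hN, hno⟩
    have htriple : ∀ τ₁ τ₂ τ₃ : Finset (Fin m), MinimalNonSimplex m K τ₁ →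
        MinimalNonSimplex m K τ₂ → MinimalNonSimplex m K τ₃ → (τ₁ ∩ τ₂ ∩ τ₃).Nonempty :=
      fun τ₁ τ₂ τ₃ h₁ h₂ h₃ =>
        Finset.nonempty_iff_ne_empty.2 fun h => hno ⟨τ₁, τ₂, τ₃, h₁, h₂, h₃, h⟩
    refine ⟨hN, fun τ₁ τ₂ h₁ h₂ => ?_, htriple⟩
    simpa [Finset.inter_assoc] using htriple τ₁ τ₂ τ₂ h₁ h₂ h₂
  · rintro ⟨hN, -, htriple⟩
    exact ⟨hN, fun ⟨τ₁, τ₂, τ₃, h₁, h₂, h₃, h⟩ => (htriple τ₁ τ₂ τ₃ h₁ h₂ h₃).ne_empty h⟩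
end

section
/- s(K) = 2 (i.e., there exists an m×2 integer matrix satisfying condition (A) for K but no m×3 integer matrix satisfying condition (A) for K) if and only if condition (S2) holds and condition (S3) fails, where (S2) is: there exist pairwise distinct τ₁, τ₂, τ₃ ∈ N(K) with τ₁∩τ₂∩τ₃ = ∅, or distinct τ₁, τ₂ ∈ N(K) with τ₁∩τ₂ = ∅; and (S3) is: N(K) contains one of the following configurations of pairwise distinct elements: (1) τ₁,…,τ₇ with τ₁∩τ₂∩τ₄ = ∅, τ₁∩τ₃∩τ₅ = ∅, τ₁∩τ₆∩τ₇ = ∅, τ₂∩τ₃∩τ₆ = ∅, τ₂∩τ₅∩τ₇ = ∅, τ₃∩τ₄∩τ₇ = ∅, τ₄∩τ₅∩τ₆ = ∅; (2) τ₁,…,τ₆ with τ₁∩τ₃ = ∅, τ₁∩τ₂∩τ₄ = ∅, τ₁∩τ₂∩τ₅ = ∅, τ₁∩τ₄∩τ₆ = ∅, τ₁∩τ₅∩τ₆ = ∅, τ₂∩τ₃∩τ₆ = ∅, τ₃∩τ₄∩τ₅ = ∅; (3) τ₁,…,τ₅ with τ₁∩τ₂ = ∅, τ₁∩τ₅ =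 ∅, τ₁∩τ₃∩τ₄ = ∅, τ₂∩τ₃∩τ₅ = ∅, τ₂∩τ₄∩τ₅ = ∅; (4) τ₁,…,τ₄ with τ₁ ∩ (τ₂ ∪ τ₃ ∪ τ₄) = ∅ and τ₂∩τ₃∩τ₄ = ∅; (5) τ₁, τ₂, τ₃ with τ₁∩τ₂ = τ₁∩τ₃ = τ₂∩τ₃ = ∅. -/
/-- Condition (S2): `N(K)` contains two disjoint elements, or three pairwise distinct
elements with empty common intersection. -/
def CondS2 (m : ℕ) (K : Set (Finset (Fin m))) : Prop :=
  (∃ τ₁ τ₂ τ₃ : Finset (Fin m), MinimalNonSimplex m K τ₁ ∧ MinimalNonSimplex m K τ₂ ∧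
    MinimalNonSimplex m K τ₃ ∧ τ₁ ≠ τ₂ ∧ τ₁ ≠ τ₃ ∧ τ₂ ≠ τ₃ ∧ τ₁ ∩ τ₂ ∩ τ₃ = ∅) ∨
  (∃ τ₁ τ₂ : Finset (Fin m), MinimalNonSimplex m K τ₁ ∧ MinimalNonSimplex m K τ₂ ∧
    τ₁ ≠ τ₂ ∧ τ₁ ∩ τ₂ = ∅)

/-- Condition (S3): `N(K)` contains one of five configurations of pairwise distinct
elements described in Proposition (S3). -/
def CondS3 (m : ℕ) (K : Set (Finset (Fin m))) : Prop :=
  (∃ τ₁ τ₂ τ₃ τ₄ τ₅ τ₆ τ₇ : Finset (Fin m),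
    (∀ τ ∈ [τ₁, τ₂, τ₃, τ₄, τ₅, τ₆, τ₇], MinimalNonSimplex m K τ) ∧
    [τ₁, τ₂, τ₃, τ₄, τ₅, τ₆, τ₇].Pairwise (· ≠ ·) ∧
    τ₁ ∩ τ₂ ∩ τ₄ = ∅ ∧ τ₁ ∩ τ₃ ∩ τ₅ = ∅ ∧ τ₁ ∩ τ₆ ∩ τ₇ = ∅ ∧
    τ₂ ∩ τ₃ ∩ τ₆ = ∅ ∧ τ₂ ∩ τ₅ ∩ τ₇ = ∅ ∧ τ₃ ∩ τ₄ ∩ τ₇ = ∅ ∧ τ₄ ∩ τ₅ ∩ τ₆ = ∅) ∨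
  (∃ τ₁ τ₂ τ₃ τ₄ τ₅ τ₆ : Finset (Fin m),
    (∀ τ ∈ [τ₁, τ₂, τ₃, τ₄, τ₅, τ₆], MinimalNonSimplex m K τ) ∧
    [τ₁, τ₂, τ₃, τ₄, τ₅, τ₆].Pairwise (· ≠ ·) ∧
    τ₁ ∩ τ₃ = ∅ ∧ τ₁ ∩ τ₂ ∩ τ₄ = ∅ ∧ τ₁ ∩ τ₂ ∩ τ₅ = ∅ ∧
    τ₁ ∩ τ₄ ∩ τ₆ = ∅ ∧ τ₁ ∩ τ₅ ∩ τ₆ = ∅ ∧ τ₂ ∩ τ₃ ∩ τ₆ = ∅ ∧ τ₃ ∩ τ₄ ∩ τ₅ = ∅) ∨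
  (∃ τ₁ τ₂ τ₃ τ₄ τ₅ : Finset (Fin m),
    (∀ τ ∈ [τ₁, τ₂, τ₃, τ₄, τ₅], MinimalNonSimplex m K τ) ∧
    [τ₁, τ₂, τ₃, τ₄, τ₅].Pairwise (· ≠ ·) ∧
    τ₁ ∩ τ₂ = ∅ ∧ τ₁ ∩ τ₅ = ∅ ∧ τ₁ ∩ τ₃ ∩ τ₄ = ∅ ∧
    τ₂ ∩ τ₃ ∩ τ₅ = ∅ ∧ τ₂ ∩ τ₄ ∩ τ₅ = ∅) ∨
  (∃ τ₁ τ₂ τ₃ τ₄ : Finset (Fin m),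
    (∀ τ ∈ [τ₁, τ₂, τ₃, τ₄], MinimalNonSimplex m K τ) ∧
    [τ₁, τ₂, τ₃, τ₄].Pairwise (· ≠ ·) ∧
    τ₁ ∩ (τ₂ ∪ τ₃ ∪ τ₄) = ∅ ∧ τ₂ ∩ τ₃ ∩ τ₄ = ∅) ∨
  (∃ τ₁ τ₂ τ₃ : Finset (Fin m),
    (∀ τ ∈ [τ₁, τ₂, τ₃], MinimalNonSimplex m K τ) ∧
    [τ₁, τ₂, τ₃].Pairwise (· ≠ ·) ∧
    τ₁ ∩ τ₂ = ∅ ∧ τ₁ ∩ τ₃ = ∅ ∧ τ₂ ∩ τ₃ = ∅)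

/-!
Reducing modulo 2: if `S` satisfies (A), then for every nonzero `w ∈ 𝔽₂ᵏ` the rows `Sⁱ` with
`⟨w, Sⁱ⟩ ≡ 0` do not generate `ℤᵏ`, so their indices miss a whole minimal non-simplex `τ_w`. Since
`⟨w₁ + w₂ + w₃, Sⁱ⟩ ≡ 1 + 1 + 1`, no vertex lies in `τ_{w₁}`, `τ_{w₂}` and `τ_{w₃}` when
`w₁ + w₂ + w₃ = 0`: the points of `PG(k-1, 2)` map to `N(K)` so that the three images of a line
have no common vertex. For `k ≤ 3` the converse holds. The points whose image contains a vertex `i`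
form a sum-free set, hence lie in an affine hyperplane `⟨w, vᵢ⟩ = 1`; the rows `vᵢ ∈ {0,1}ᵏ` span
`𝔽₂ᵏ` on every set of vertices meeting all minimal non-simplices, and a `{0,1}`-matrix of size at
most 3 that is invertible mod 2 has determinant `±1`.

For `k = 2` the single line of `PG(1, 2)` gives (S2). For `k = 3` the configurations of (S3) are
the images of the Fano plane: a coincidence between the images of two points becomes `x = y` after
a change of coordinates, which is configuration (2), and each further coincidence turns a
configuration into one with a larger number.
-/

open Matrix

namespace Buchstaber

variable {m k : ℕ} {K : Set (Finset (Fin m))}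

theorem MinimalNonSimplex.nonempty (hK : IsSimplicialComplex m K) {τ : Finset (Fin m)}
    (hτ : MinimalNonSimplex m K τ) : τ.Nonempty :=
  Finset.nonempty_iff_ne_empty.2 fun h => hτ.1 (h ▸ hK.1)

theorem exists_minimalNonSimplex_subset {σ : Finset (Fin m)} (hσ : σ ∉ K) :
    ∃ τ ⊆ σ, MinimalNonSimplex m K τ := by
  induction σ using Finset.strongInduction with
  | _ σ ih =>
    by_cases hmin : ∀ ρ ⊂ σ, ρ ∈ K
    · exact ⟨σ, subset_rfl, hσ, hmin⟩
    push Not at hmin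
    obtain ⟨ρ, hρσ, hρ⟩ := hmin
    obtain ⟨τ, hτρ, hτ⟩ := ih ρ hρσ hρ
    exact ⟨τ, hτρ.trans hρσ.subset, hτ⟩

theorem CondA.span_image_eq_top {S : Matrix (Fin m) (Fin k) ℤ} (hA : CondA m k K S)
    {C : Finset (Fin m)} (hC : ∀ τ, MinimalNonSimplex m K τ → ∃ i ∈ τ, i ∈ C) :
    Submodule.span ℤ ((fun i => S i) '' C) = ⊤ := by
  have hCc : Cᶜ ∈ K := by
    by_contra h
    obtain ⟨τ, hτC, hτ⟩ := exists_minimalNonSimplex_subset h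
    obtain ⟨i, hiτ, hiC⟩ := hC τ hτ
    exact Finset.mem_compl.1 (hτC hiτ) hiC
  simpa using hA _ hCc

theorem condA_of_forall_span_image_eq_top (hK : IsSimplicialComplex m K)
    {S : Matrix (Fin m) (Fin k) ℤ}
    (h : ∀ C : Finset (Fin m), (∀ τ, MinimalNonSimplex m K τ → ∃ i ∈ τ, i ∈ C) →
      Submodule.span ℤ ((fun i => S i) '' C) = ⊤) :
    CondA m k K S := by
  intro σ hσ
  have hmeet : ∀ τ, MinimalNonSimplex m K τ → ∃ i ∈ τ, i ∈ σᶜ := by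
    intro τ hτ
    by_contra! hτσ
    exact hτ.1 (hK.2 σ hσ τ fun i hi => by simpa using hτσ i hi)
  have hσc := h σᶜ hmeet
  rwa [Finset.coe_compl] at hσc

theorem span_eq_top_iff_forall_dotProduct_ne_zero {ι F : Type*} [Fintype ι] [Field F]
    {s : Set (ι → F)} : Submodule.span F s = ⊤ ↔ ∀ w ≠ 0, ∃ v ∈ s, w ⬝ᵥ v ≠ 0 := by
  classical
  rw [← Submodule.dualAnnihilator_eq_bot_iff, Submodule.eq_bot_iff,
    (dotProductEquiv F ι).surjective.forall]
  refine forall_congr' fun w => ?_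
  have hspan := Submodule.span_le (s := s) (p := LinearMap.ker (dotProductEquiv F ι w))
  simp only [SetLike.le_def, Set.subset_def, SetLike.mem_coe, LinearMap.mem_ker,
    dotProductEquiv_apply_apply] at hspan
  rw [LinearEquiv.map_eq_zero_iff, Submodule.mem_dualAnnihilator, ← not_imp_not]
  simp [hspan]

abbrev reduceMod2 : (Fin k → ℤ) →ₗ[ℤ] Fin k → ZMod 2 :=
  (Int.castAddHom (ZMod 2)).toIntLinearMap.compLeft (Fin k)

theorem span_image_reduceMod2_eq_top {s : Set (Fin k → ℤ)} (hs : Submodule.span ℤ s = ⊤) :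
    Submodule.span (ZMod 2) (reduceMod2 '' s) = ⊤ := by
  refine eq_top_iff.2 fun v _ => ?_
  have hv : reduceMod2 (fun j => ((v j).val : ℤ)) = v := by ext j; simp
  rw [← hv]
  exact Submodule.span_le_restrictScalars ℤ (ZMod 2) _
    (Submodule.apply_mem_span_image_of_mem_span _ (hs ▸ Submodule.mem_top))

theorem CondA.exists_minimalNonSimplex_dotProduct_eq_one {S : Matrix (Fin m) (Fin k) ℤ}
    (hA : CondA m k K S) {w : Fin k → ZMod 2} (hw : w ≠ 0) :
    ∃ τ, MinimalNonSimplex m K τ ∧ ∀ i ∈ τ, w ⬝ᵥ reduceMod2 (S i) = 1 := by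
  classical
  set C := Finset.univ.filter fun i => w ⬝ᵥ reduceMod2 (S i) = 0
  have hC : Submodule.span ℤ ((fun i => S i) '' C) ≠ ⊤ := by
    intro htop
    obtain ⟨_, ⟨_, ⟨i, hi, rfl⟩, rfl⟩, hwi⟩ :=
      span_eq_top_iff_forall_dotProduct_ne_zero.1 (span_image_reduceMod2_eq_top htop) w hw
    exact hwi (Finset.mem_filter.1 hi).2
  obtain ⟨τ, hτ, hτC⟩ : ∃ τ, MinimalNonSimplex m K τ ∧ ∀ i ∈ τ, i ∉ C := by
    by_contra! h
    exact hC (CondA.span_image_eq_top hA h)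
  refine ⟨τ, hτ, fun i hi => ?_⟩
  have hne : w ⬝ᵥ reduceMod2 (S i) ≠ 0 := by simpa [C] using hτC i hi
  exact Fin.eq_one_of_ne_zero _ hne

/-- Disjointness of `σ` and `τ` is the case `NoCommonVertex σ σ τ`, so substituting a
coincidence between the sets of a configuration turns triple conditions into disjointness. -/
def NoCommonVertex (σ₁ σ₂ σ₃ : Finset (Fin m)) : Prop :=
  ∀ ⦃i⦄, i ∈ σ₁ → i ∈ σ₂ → i ∉ σ₃

theorem noCommonVertex_iff {σ₁ σ₂ σ₃ : Finset (Fin m)} :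
    NoCommonVertex σ₁ σ₂ σ₃ ↔ σ₁ ∩ σ₂ ∩ σ₃ = ∅ := by
  simp [NoCommonVertex, Finset.eq_empty_iff_forall_notMem]

theorem noCommonVertex_self_iff {σ τ : Finset (Fin m)} :
    NoCommonVertex σ σ τ ↔ σ ∩ τ = ∅ := by
  simp [NoCommonVertex, Finset.eq_empty_iff_forall_notMem]

theorem NoCommonVertex.ne (hK : IsSimplicialComplex m K) {σ τ : Finset (Fin m)}
    (hσ : MinimalNonSimplex m K σ) (h : NoCommonVertex σ σ τ) : σ ≠ τ := by
  rintro rfl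
  obtain ⟨i, hi⟩ := MinimalNonSimplex.nonempty hK hσ
  exact h hi hi hi

/-- The nonzero vectors of `𝔽₂ᵏ` are the points of `PG(k-1, 2)`, and three of them lie on a line
iff they sum to zero. -/
structure IsProjectiveFamily (K : Set (Finset (Fin m))) (ρ : (Fin k → ZMod 2) → Finset (Fin m)) :
    Prop where
  minimalNonSimplex : ∀ w ≠ 0, MinimalNonSimplex m K (ρ w)
  noCommonVertex : ∀ w₁ w₂ w₃, w₁ ≠ 0 → w₂ ≠ 0 → w₃ ≠ 0 → w₁ + w₂ + w₃ = 0 →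
    NoCommonVertex (ρ w₁) (ρ w₂) (ρ w₃)

theorem CondA.exists_isProjectiveFamily {S : Matrix (Fin m) (Fin k) ℤ} (hA : CondA m k K S) :
    ∃ ρ : (Fin k → ZMod 2) → Finset (Fin m), IsProjectiveFamily K ρ := by
  choose! ρ hρ using fun w (hw : w ≠ 0) => CondA.exists_minimalNonSimplex_dotProduct_eq_one hA hw
  refine ⟨ρ, fun w hw => (hρ w hw).1, fun w₁ w₂ w₃ h₁ h₂ h₃ hw i hi₁ hi₂ hi₃ => ?_⟩
  have hsum := congrArg (· ⬝ᵥ reduceMod2 (S i)) hw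
  simp only [add_dotProduct, zero_dotProduct, (hρ _ h₁).2 i hi₁, (hρ _ h₂).2 i hi₂,
    (hρ _ h₃).2 i hi₃] at hsum
  exact absurd hsum (by decide)

set_option synthInstance.maxSize 2000 in
set_option maxRecDepth 10000 in
theorem exists_dotProduct_eq_one_of_sumFree (hk : k ≤ 3) {W : Finset (Fin k → ZMod 2)}
    (hW : ∀ a ∈ W, ∀ b ∈ W, a + b ∉ W) : ∃ v, ∀ w ∈ W, w ⬝ᵥ v = 1 := by
  interval_cases k <;> revert W <;> decide

set_option maxRecDepth 10000 in
theorem isUnit_det_map_val (hk : k ≤ 3) {M : Matrix (Fin k) (Fin k) (ZMod 2)}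
    (hM : IsUnit M.det) : IsUnit (M.map fun x => (x.val : ℤ)).det := by
  rw [isUnit_iff_ne_zero] at hM
  rw [Int.isUnit_iff]
  interval_cases k
  · simp
  · revert M; simp only [det_fin_one, map_apply]; decide
  · revert M; simp only [det_fin_two, map_apply]; decide
  · revert M; simp only [det_fin_three, map_apply]; decide

theorem span_image_val_eq_top (hk : k ≤ 3) {s : Set (Fin k → ZMod 2)}
    (hs : Submodule.span (ZMod 2) s = ⊤) :
    Submodule.span ℤ ((fun v j => ((v j).val : ℤ)) '' s) = ⊤ := by
  obtain ⟨b, hbs, hb, hli⟩ := exists_linearIndependent (ZMod 2) s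
  let e := (Module.Basis.mk hli (by rw [Subtype.range_coe, hb, hs])).indexEquiv
    (Pi.basisFun (ZMod 2) (Fin k))
  let M : Matrix (Fin k) (Fin k) (ZMod 2) := fun j => e.symm j
  have hM : IsUnit M.det := (isUnit_iff_isUnit_det M).1 <|
    linearIndependent_rows_iff_isUnit.1 (hli.comp e.symm e.symm.injective)
  have hrows : Submodule.span ℤ (Set.range (M.map fun x => (x.val : ℤ)).row) = ⊤ := by
    rw [← range_vecMulLinear, LinearMap.range_eq_top]
    exact vecMul_surjective_iff_isUnit.2 ((isUnit_iff_isUnit_det _).2 (isUnit_det_map_val hk hM))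
  refine top_unique (hrows ▸ Submodule.span_mono ?_)
  rintro _ ⟨j, rfl⟩
  exact ⟨_, hbs (e.symm j).2, rfl⟩

theorem IsProjectiveFamily.exists_condA (hK : IsSimplicialComplex m K) (hk : k ≤ 3)
    {ρ : (Fin k → ZMod 2) → Finset (Fin m)} (hρ : IsProjectiveFamily K ρ) :
    ∃ S : Matrix (Fin m) (Fin k) ℤ, CondA m k K S := by
  classical
  have hrow : ∀ i, ∃ v : Fin k → ZMod 2, ∀ w ≠ 0, i ∈ ρ w → w ⬝ᵥ v = 1 := by
    intro i
    obtain ⟨v, hv⟩ := exists_dotProduct_eq_one_of_sumFree hk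
      (W := Finset.univ.filter fun w => w ≠ 0 ∧ i ∈ ρ w) <| by
        simp only [Finset.mem_filter, Finset.mem_univ, true_and]
        rintro a ⟨ha, hia⟩ b ⟨hb, hib⟩ ⟨hab, hiab⟩
        exact hρ.noCommonVertex a b (a + b) ha hb hab (ZModModule.add_self _) hia hib hiab
    exact ⟨v, fun w hw hiw => hv w (by simp [hw, hiw])⟩
  choose v hv using hrow
  refine ⟨Matrix.of fun i j => ((v i j).val : ℤ), condA_of_forall_span_image_eq_top hK ?_⟩
  intro C hC
  have hspan : Submodule.span (ZMod 2) (v '' C) = ⊤ := by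
    refine span_eq_top_iff_forall_dotProduct_ne_zero.2 fun w hw => ?_
    obtain ⟨i, hiw, hiC⟩ := hC (ρ w) (hρ.minimalNonSimplex w hw)
    exact ⟨v i, ⟨i, hiC, rfl⟩, by simp [hv i w hw hiw]⟩
  have hrows := span_image_val_eq_top hk hspan
  rwa [Set.image_image] at hrows

theorem exists_condA_iff_exists_isProjectiveFamily (hK : IsSimplicialComplex m K) (hk : k ≤ 3) :
    (∃ S : Matrix (Fin m) (Fin k) ℤ, CondA m k K S) ↔
      ∃ ρ : (Fin k → ZMod 2) → Finset (Fin m), IsProjectiveFamily K ρ :=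
  ⟨fun ⟨_, hA⟩ => CondA.exists_isProjectiveFamily hA,
    fun ⟨_, hρ⟩ => hρ.exists_condA hK hk⟩

theorem IsProjectiveFamily.of_lines {ρ : (Fin k → ZMod 2) → Finset (Fin m)}
    (L : List ((Fin k → ZMod 2) × (Fin k → ZMod 2) × (Fin k → ZMod 2)))
    (hL : ∀ w₁ w₂ w₃ : Fin k → ZMod 2, w₁ ≠ 0 → w₂ ≠ 0 → w₃ ≠ 0 → w₁ + w₂ + w₃ = 0 →
      ∃ l ∈ L, l.1 ∈ [w₁, w₂, w₃] ∧ l.2.1 ∈ [w₁, w₂, w₃] ∧ l.2.2 ∈ [w₁, w₂, w₃])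
    (hM : ∀ w ≠ 0, MinimalNonSimplex m K (ρ w))
    (hN : ∀ l ∈ L, NoCommonVertex (ρ l.1) (ρ l.2.1) (ρ l.2.2)) :
    IsProjectiveFamily K ρ where
  minimalNonSimplex := hM
  noCommonVertex w₁ w₂ w₃ h₁ h₂ h₃ hw i hi₁ hi₂ hi₃ := by
    obtain ⟨l, hl, ha, hb, hc⟩ := hL w₁ w₂ w₃ h₁ h₂ h₃ hw
    have hi : ∀ u ∈ [w₁, w₂, w₃], i ∈ ρ u := by simp [hi₁, hi₂, hi₃]
    exact hN l hl (hi _ ha) (hi _ hb) (hi _ hc)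

theorem condS2_of_noCommonVertex (hK : IsSimplicialComplex m K) {τ₁ τ₂ τ₃ : Finset (Fin m)}
    (h₁ : MinimalNonSimplex m K τ₁) (h₂ : MinimalNonSimplex m K τ₂)
    (h₃ : MinimalNonSimplex m K τ₃) (h : NoCommonVertex τ₁ τ₂ τ₃) : CondS2 m K := by
  by_cases h₁₂ : τ₁ = τ₂
  · subst h₁₂
    exact Or.inr ⟨_, _, h₁, h₃, h.ne hK h₁, noCommonVertex_self_iff.1 h⟩
  by_cases h₁₃ : τ₁ = τ₃
  · subst h₁₃
    have d : NoCommonVertex τ₁ τ₁ τ₂ := fun _ a _ c => h a c a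
    exact Or.inr ⟨_, _, h₁, h₂, d.ne hK h₁, noCommonVertex_self_iff.1 d⟩
  by_cases h₂₃ : τ₂ = τ₃
  · subst h₂₃
    have d : NoCommonVertex τ₂ τ₂ τ₁ := fun _ a _ c => h c a a
    exact Or.inr ⟨_, _, h₂, h₁, d.ne hK h₂, noCommonVertex_self_iff.1 d⟩
  exact Or.inl ⟨_, _, _, h₁, h₂, h₃, h₁₂, h₁₃, h₂₃, noCommonVertex_iff.1 h⟩

set_option synthInstance.maxSize 2000 in
theorem isProjectiveFamily_two_of_noCommonVertex {τ₁ τ₂ τ₃ : Finset (Fin m)}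
    (h₁ : MinimalNonSimplex m K τ₁) (h₂ : MinimalNonSimplex m K τ₂)
    (h₃ : MinimalNonSimplex m K τ₃) (h : NoCommonVertex τ₁ τ₂ τ₃) :
    IsProjectiveFamily K fun w : Fin 2 → ZMod 2 => ![![∅, τ₂], ![τ₁, τ₃]] (w 0) (w 1) := by
  refine .of_lines [(![1, 0], ![0, 1], ![1, 1])] (by decide) (fun w hw => ?_) fun l hl => ?_
  · obtain rfl | rfl | rfl : w = ![1, 0] ∨ w = ![0, 1] ∨ w = ![1, 1] := by revert w; decide
    exacts [h₁, h₂, h₃]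
  · obtain rfl := List.mem_singleton.1 hl
    exact h

theorem exists_isProjectiveFamily_two_iff (hK : IsSimplicialComplex m K) :
    (∃ ρ : (Fin 2 → ZMod 2) → Finset (Fin m), IsProjectiveFamily K ρ) ↔ CondS2 m K := by
  constructor
  · rintro ⟨ρ, hρ⟩
    have hM := hρ.minimalNonSimplex
    exact condS2_of_noCommonVertex hK (hM ![1, 0] (by decide)) (hM ![0, 1] (by decide))
      (hM ![1, 1] (by decide)) (hρ.noCommonVertex _ _ _ (by decide) (by decide) (by decide)
        (by decide))
  · rintro (⟨τ₁, τ₂, τ₃, h₁, h₂, h₃, -, -, -, h⟩ | ⟨τ₁, τ₂, h₁, h₂, -, h⟩)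
    · exact ⟨_, isProjectiveFamily_two_of_noCommonVertex h₁ h₂ h₃ (noCommonVertex_iff.2 h)⟩
    · have d := noCommonVertex_self_iff.2 h
      exact ⟨_, isProjectiveFamily_two_of_noCommonVertex h₁ h₂ h₂ fun _ a b _ => d a a b⟩

/-- Configuration (1) of (S3) with coincidences allowed: the conditions satisfied by the images
of `x, y, z, x + y, x + z, y + z, x + y + z` under a projective family, for independent `x y z`. -/
def FanoPattern (τ₁ τ₂ τ₃ τ₄ τ₅ τ₆ τ₇ : Finset (Fin m)) : Prop :=
  NoCommonVertex τ₁ τ₂ τ₄ ∧ NoCommonVertex τ₁ τ₃ τ₅ ∧ NoCommonVertex τ₁ τ₆ τ₇ ∧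
    NoCommonVertex τ₂ τ₃ τ₆ ∧ NoCommonVertex τ₂ τ₅ τ₇ ∧ NoCommonVertex τ₃ τ₄ τ₇ ∧
    NoCommonVertex τ₄ τ₅ τ₆

theorem add_ne_zero_of_ne {a b : Fin k → ZMod 2} (h : a ≠ b) : a + b ≠ 0 := by
  rwa [Ne, add_eq_zero_iff_eq_neg, ZModModule.neg_eq_self]

theorem add_add_eq_zero_of_add_eq {a b c : Fin k → ZMod 2} (h : a + b = c) : a + b + c = 0 := by
  rw [h, ZModModule.add_self]

theorem IsProjectiveFamily.fanoPattern {ρ : (Fin k → ZMod 2) → Finset (Fin m)}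
    (hρ : IsProjectiveFamily K ρ) {x y z : Fin k → ZMod 2} (hx : x ≠ 0) (hy : y ≠ 0) (hz : z ≠ 0)
    (hxy : x ≠ y) (hxz : x ≠ z) (hyz : y ≠ z) (hxyz : x + y ≠ z) :
    FanoPattern (ρ x) (ρ y) (ρ z) (ρ (x + y)) (ρ (x + z)) (ρ (y + z)) (ρ (x + y + z)) := by
  have h := hρ.noCommonVertex
  have hxy' := add_ne_zero_of_ne hxy
  have hxz' := add_ne_zero_of_ne hxz
  have hyz' := add_ne_zero_of_ne hyz
  have hxyz' := add_ne_zero_of_ne hxyz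
  exact ⟨h _ _ _ hx hy hxy' (add_add_eq_zero_of_add_eq rfl),
    h _ _ _ hx hz hxz' (add_add_eq_zero_of_add_eq rfl),
    h _ _ _ hx hyz' hxyz' (add_add_eq_zero_of_add_eq (add_assoc x y z).symm),
    h _ _ _ hy hz hyz' (add_add_eq_zero_of_add_eq rfl),
    h _ _ _ hy hxz' hxyz' (add_add_eq_zero_of_add_eq (by abel)),
    h _ _ _ hz hxy' hxyz' (add_add_eq_zero_of_add_eq (add_comm z _)),
    h _ _ _ hxy' hxz' hyz' (add_add_eq_zero_of_add_eq (by
      rw [add_comm x y]; exact ZModModule.add_add_add_cancel y x z))⟩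

set_option synthInstance.maxSize 2000 in
theorem isProjectiveFamily_three_of_fanoPattern {τ₁ τ₂ τ₃ τ₄ τ₅ τ₆ τ₇ : Finset (Fin m)}
    (hM : ∀ τ ∈ [τ₁, τ₂, τ₃, τ₄, τ₅, τ₆, τ₇], MinimalNonSimplex m K τ)
    (h : FanoPattern τ₁ τ₂ τ₃ τ₄ τ₅ τ₆ τ₇) :
    IsProjectiveFamily K fun w : Fin 3 → ZMod 2 =>
      ![![![∅, τ₃], ![τ₂, τ₆]], ![![τ₁, τ₅], ![τ₄, τ₇]]] (w 0) (w 1) (w 2) := by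
  obtain ⟨t₁₂₄, t₁₃₅, t₁₆₇, t₂₃₆, t₂₅₇, t₃₄₇, t₄₅₆⟩ := h
  refine .of_lines [(![1, 0, 0], ![0, 1, 0], ![1, 1, 0]), (![1, 0, 0], ![0, 0, 1], ![1, 0, 1]),
      (![1, 0, 0], ![0, 1, 1], ![1, 1, 1]), (![0, 1, 0], ![0, 0, 1], ![0, 1, 1]),
      (![0, 1, 0], ![1, 0, 1], ![1, 1, 1]), (![0, 0, 1], ![1, 1, 0], ![1, 1, 1]),
      (![1, 1, 0], ![1, 0, 1], ![0, 1, 1])] (by decide) (fun w hw => ?_) fun l hl => ?_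
  · obtain rfl | rfl | rfl | rfl | rfl | rfl | rfl : w = ![1, 0, 0] ∨ w = ![0, 1, 0] ∨
        w = ![0, 0, 1] ∨ w = ![1, 1, 0] ∨ w = ![1, 0, 1] ∨ w = ![0, 1, 1] ∨ w = ![1, 1, 1] := by
      revert w; decide
    exacts [hM τ₁ (by simp), hM τ₂ (by simp), hM τ₃ (by simp), hM τ₄ (by simp),
      hM τ₅ (by simp), hM τ₆ (by simp), hM τ₇ (by simp)]
  · simp only [List.mem_cons, List.not_mem_nil, or_false] at hl
    obtain rfl | rfl | rfl | rfl | rfl | rfl | rfl := hl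
    exacts [t₁₂₄, t₁₃₅, t₁₆₇, t₂₃₆, t₂₅₇, t₃₄₇, t₄₅₆]

/-- The hypotheses of `condS3_of_patternₙ` are those of configuration (n) of (S3) without
distinctness; a coincidence among the sets leads to a configuration with a larger number. -/
theorem condS3_of_pattern₅ (hK : IsSimplicialComplex m K) {τ₁ τ₂ τ₃ : Finset (Fin m)}
    (h₁ : MinimalNonSimplex m K τ₁) (h₂ : MinimalNonSimplex m K τ₂) (h₃ : MinimalNonSimplex m K τ₃)
    (d₁₂ : NoCommonVertex τ₁ τ₁ τ₂) (d₁₃ : NoCommonVertex τ₁ τ₁ τ₃)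
    (d₂₃ : NoCommonVertex τ₂ τ₂ τ₃) : CondS3 m K :=
  Or.inr <| Or.inr <| Or.inr <| Or.inr ⟨τ₁, τ₂, τ₃, by simp [h₁, h₂, h₃],
    by simp [d₁₂.ne hK h₁, d₁₃.ne hK h₁, d₂₃.ne hK h₂], noCommonVertex_self_iff.1 d₁₂,
    noCommonVertex_self_iff.1 d₁₃, noCommonVertex_self_iff.1 d₂₃⟩

theorem condS3_of_pattern₄ (hK : IsSimplicialComplex m K) {τ₁ τ₂ τ₃ τ₄ : Finset (Fin m)}
    (h₁ : MinimalNonSimplex m K τ₁) (h₂ : MinimalNonSimplex m K τ₂) (h₃ : MinimalNonSimplex m K τ₃)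
    (h₄ : MinimalNonSimplex m K τ₄) (d₁₂ : NoCommonVertex τ₁ τ₁ τ₂)
    (d₁₃ : NoCommonVertex τ₁ τ₁ τ₃) (d₁₄ : NoCommonVertex τ₁ τ₁ τ₄)
    (t₂₃₄ : NoCommonVertex τ₂ τ₃ τ₄) : CondS3 m K := by
  by_cases h₂₃ : τ₂ = τ₃
  · subst h₂₃; exact condS3_of_pattern₅ hK h₁ h₂ h₄ d₁₂ d₁₄ t₂₃₄
  by_cases h₂₄ : τ₂ = τ₄
  · subst h₂₄; exact condS3_of_pattern₅ hK h₁ h₂ h₃ d₁₂ d₁₃ fun _ a _ c => t₂₃₄ a c a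
  by_cases h₃₄ : τ₃ = τ₄
  · subst h₃₄; exact condS3_of_pattern₅ hK h₁ h₂ h₃ d₁₂ d₁₃ fun _ a _ c => t₂₃₄ a c c
  refine Or.inr <| Or.inr <| Or.inr <| Or.inl ⟨τ₁, τ₂, τ₃, τ₄, by simp [h₁, h₂, h₃, h₄],
    by simp [d₁₂.ne hK h₁, d₁₃.ne hK h₁, d₁₄.ne hK h₁, h₂₃, h₂₄, h₃₄], ?_,
    noCommonVertex_iff.1 t₂₃₄⟩
  simp only [Finset.inter_union_distrib_left, Finset.union_eq_empty, ← noCommonVertex_self_iff]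
  exact ⟨⟨d₁₂, d₁₃⟩, d₁₄⟩

theorem condS3_of_pattern₃ (hK : IsSimplicialComplex m K) {τ₁ τ₂ τ₃ τ₄ τ₅ : Finset (Fin m)}
    (h₁ : MinimalNonSimplex m K τ₁) (h₂ : MinimalNonSimplex m K τ₂) (h₃ : MinimalNonSimplex m K τ₃)
    (h₄ : MinimalNonSimplex m K τ₄) (h₅ : MinimalNonSimplex m K τ₅)
    (d₁₂ : NoCommonVertex τ₁ τ₁ τ₂) (d₁₅ : NoCommonVertex τ₁ τ₁ τ₅)
    (t₁₃₄ : NoCommonVertex τ₁ τ₃ τ₄) (t₂₃₅ : NoCommonVertex τ₂ τ₃ τ₅)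
    (t₂₄₅ : NoCommonVertex τ₂ τ₄ τ₅) : CondS3 m K := by
  by_cases h₁₃ : τ₁ = τ₃
  · subst h₁₃; exact condS3_of_pattern₄ hK h₁ h₂ h₄ h₅ d₁₂ t₁₃₄ d₁₅ t₂₄₅
  by_cases h₁₄ : τ₁ = τ₄
  · subst h₁₄
    exact condS3_of_pattern₄ hK h₁ h₂ h₃ h₅ d₁₂ (fun _ a _ c => t₁₃₄ a c a) d₁₅ t₂₃₅
  by_cases h₂₃ : τ₂ = τ₃
  · subst h₂₃; exact condS3_of_pattern₅ hK h₁ h₂ h₅ d₁₂ d₁₅ t₂₃₅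
  by_cases h₂₄ : τ₂ = τ₄
  · subst h₂₄; exact condS3_of_pattern₅ hK h₁ h₂ h₅ d₁₂ d₁₅ t₂₄₅
  by_cases h₂₅ : τ₂ = τ₅
  · subst h₂₅
    exact condS3_of_pattern₄ hK h₂ h₁ h₃ h₄ (fun _ a _ c => d₁₂ c c a)
      (fun _ a _ c => t₂₃₅ a c a) (fun _ a _ c => t₂₄₅ a c a) t₁₃₄
  by_cases h₃₄ : τ₃ = τ₄
  · subst h₃₄
    exact condS3_of_pattern₄ hK h₁ h₂ h₃ h₅ d₁₂ (fun _ a _ c => t₁₃₄ a c c) d₁₅ t₂₃₅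
  by_cases h₃₅ : τ₃ = τ₅
  · subst h₃₅; exact condS3_of_pattern₅ hK h₁ h₂ h₃ d₁₂ d₁₅ fun _ a _ c => t₂₃₅ a c c
  by_cases h₄₅ : τ₄ = τ₅
  · subst h₄₅; exact condS3_of_pattern₅ hK h₁ h₂ h₄ d₁₂ d₁₅ fun _ a _ c => t₂₄₅ a c c
  exact Or.inr <| Or.inr <| Or.inl ⟨τ₁, τ₂, τ₃, τ₄, τ₅, by simp [h₁, h₂, h₃, h₄, h₅],
    by simp [d₁₂.ne hK h₁, d₁₅.ne hK h₁, h₁₃, h₁₄, h₂₃, h₂₄, h₂₅, h₃₄, h₃₅, h₄₅],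
    noCommonVertex_self_iff.1 d₁₂, noCommonVertex_self_iff.1 d₁₅, noCommonVertex_iff.1 t₁₃₄,
    noCommonVertex_iff.1 t₂₃₅, noCommonVertex_iff.1 t₂₄₅⟩

theorem condS3_of_pattern₂ (hK : IsSimplicialComplex m K) {τ₁ τ₂ τ₃ τ₄ τ₅ τ₆ : Finset (Fin m)}
    (h₁ : MinimalNonSimplex m K τ₁) (h₂ : MinimalNonSimplex m K τ₂) (h₃ : MinimalNonSimplex m K τ₃)
    (h₄ : MinimalNonSimplex m K τ₄) (h₅ : MinimalNonSimplex m K τ₅)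
    (h₆ : MinimalNonSimplex m K τ₆) (d₁₃ : NoCommonVertex τ₁ τ₁ τ₃)
    (t₁₂₄ : NoCommonVertex τ₁ τ₂ τ₄) (t₁₂₅ : NoCommonVertex τ₁ τ₂ τ₅)
    (t₁₄₆ : NoCommonVertex τ₁ τ₄ τ₆) (t₁₅₆ : NoCommonVertex τ₁ τ₅ τ₆)
    (t₂₃₆ : NoCommonVertex τ₂ τ₃ τ₆) (t₃₄₅ : NoCommonVertex τ₃ τ₄ τ₅) : CondS3 m K := by
  have d₃₁ : NoCommonVertex τ₃ τ₃ τ₁ := fun _ a _ c => d₁₃ c c a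
  by_cases h₁₂ : τ₁ = τ₂
  · subst h₁₂; exact condS3_of_pattern₄ hK h₁ h₃ h₄ h₅ d₁₃ t₁₂₄ t₁₂₅ t₃₄₅
  by_cases h₁₄ : τ₁ = τ₄
  · subst h₁₄
    exact condS3_of_pattern₄ hK h₁ h₂ h₃ h₆ (fun _ a _ c => t₁₂₄ a c a) d₁₃ t₁₄₆ t₂₃₆
  by_cases h₁₅ : τ₁ = τ₅
  · subst h₁₅
    exact condS3_of_pattern₄ hK h₁ h₂ h₃ h₆ (fun _ a _ c => t₁₂₅ a c a) d₁₃ t₁₅₆ t₂₃₆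
  by_cases h₁₆ : τ₁ = τ₆
  · subst h₁₆
    exact condS3_of_pattern₄ hK h₁ h₃ h₄ h₅ d₁₃ (fun _ a _ c => t₁₄₆ a c a)
      (fun _ a _ c => t₁₅₆ a c a) t₃₄₅
  by_cases h₂₃ : τ₂ = τ₃
  · subst h₂₃; exact condS3_of_pattern₃ hK h₂ h₁ h₄ h₅ h₆ d₃₁ t₂₃₆ t₃₄₅ t₁₄₆ t₁₅₆
  by_cases h₂₄ : τ₂ = τ₄
  · subst h₂₄
    exact condS3_of_pattern₃ hK h₁ h₃ h₅ h₆ h₂ d₁₃ (fun _ a _ c => t₁₂₄ a c c) t₁₅₆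
      (fun _ a b c => t₃₄₅ a c b) (fun _ a b c => t₂₃₆ c a b)
  by_cases h₂₅ : τ₂ = τ₅
  · subst h₂₅
    exact condS3_of_pattern₃ hK h₁ h₃ h₄ h₆ h₂ d₁₃ (fun _ a _ c => t₁₂₅ a c c) t₁₄₆ t₃₄₅
      (fun _ a b c => t₂₃₆ c a b)
  by_cases h₂₆ : τ₂ = τ₆
  · subst h₂₆
    exact condS3_of_pattern₃ hK h₃ h₁ h₄ h₅ h₂ d₃₁ (fun _ a _ c => t₂₃₆ c a c) t₃₄₅ t₁₄₆ t₁₅₆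
  by_cases h₃₄ : τ₃ = τ₄
  · subst h₃₄
    exact condS3_of_pattern₃ hK h₃ h₁ h₂ h₆ h₅ d₃₁ t₃₄₅ (fun _ a b c => t₂₃₆ b a c) t₁₂₅
      (fun _ a b c => t₁₅₆ a c b)
  by_cases h₃₅ : τ₃ = τ₅
  · subst h₃₅
    exact condS3_of_pattern₃ hK h₃ h₁ h₂ h₆ h₄ d₃₁ (fun _ a _ c => t₃₄₅ a c a)
      (fun _ a b c => t₂₃₆ b a c) t₁₂₄ (fun _ a b c => t₁₄₆ a c b)
  by_cases h₃₆ : τ₃ = τ₆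
  · subst h₃₆
    exact condS3_of_pattern₃ hK h₃ h₁ h₄ h₅ h₂ d₃₁ (fun _ a _ c => t₂₃₆ c a a) t₃₄₅
      (fun _ a b c => t₁₂₄ a c b) (fun _ a b c => t₁₂₅ a c b)
  by_cases h₄₅ : τ₄ = τ₅
  · subst h₄₅
    exact condS3_of_pattern₃ hK h₃ h₁ h₂ h₆ h₄ d₃₁ (fun _ a _ c => t₃₄₅ a c c)
      (fun _ a b c => t₂₃₆ b a c) t₁₂₄ (fun _ a b c => t₁₄₆ a c b)
  by_cases h₄₆ : τ₄ = τ₆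
  · subst h₄₆
    exact condS3_of_pattern₃ hK h₁ h₃ h₂ h₅ h₄ d₁₃ (fun _ a _ c => t₁₄₆ a c c) t₁₂₅
      (fun _ a b c => t₂₃₆ b a c) (fun _ a b c => t₃₄₅ a c b)
  by_cases h₅₆ : τ₅ = τ₆
  · subst h₅₆
    exact condS3_of_pattern₃ hK h₁ h₃ h₂ h₄ h₅ d₁₃ (fun _ a _ c => t₁₅₆ a c c) t₁₂₄
      (fun _ a b c => t₂₃₆ b a c) t₃₄₅
  exact Or.inr <| Or.inl ⟨τ₁, τ₂, τ₃, τ₄, τ₅, τ₆, by simp [h₁, h₂, h₃, h₄, h₅, h₆],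
    by simp [d₁₃.ne hK h₁, h₁₂, h₁₄, h₁₅, h₁₆, h₂₃, h₂₄, h₂₅, h₂₆, h₃₄, h₃₅, h₃₆, h₄₅, h₄₆, h₅₆],
    noCommonVertex_self_iff.1 d₁₃, noCommonVertex_iff.1 t₁₂₄, noCommonVertex_iff.1 t₁₂₅,
    noCommonVertex_iff.1 t₁₄₆, noCommonVertex_iff.1 t₁₅₆, noCommonVertex_iff.1 t₂₃₆,
    noCommonVertex_iff.1 t₃₄₅⟩

set_option synthInstance.maxSize 2000 in
theorem IsProjectiveFamily.condS3 (hK : IsSimplicialComplex m K)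
    {ρ : (Fin 3 → ZMod 2) → Finset (Fin m)} (hρ : IsProjectiveFamily K ρ) : CondS3 m K := by
  have hM := hρ.minimalNonSimplex
  by_cases hcoinc : ∃ x y, x ≠ 0 ∧ y ≠ 0 ∧ x ≠ y ∧ ρ x = ρ y
  · obtain ⟨x, y, hx, hy, hxy, hρxy⟩ := hcoinc
    obtain ⟨z, hz, hxz, hyz, hxyz⟩ := (by decide : ∀ x y : Fin 3 → ZMod 2,
      ∃ z, z ≠ 0 ∧ x ≠ z ∧ y ≠ z ∧ x + y ≠ z) x y
    obtain ⟨t₁₂₄, t₁₃₅, t₁₆₇, t₂₃₆, t₂₅₇, t₃₄₇, t₄₅₆⟩ :=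
      hρ.fanoPattern hx hy hz hxy hxz hyz hxyz
    rw [← hρxy] at t₁₂₄ t₂₃₆ t₂₅₇
    exact condS3_of_pattern₂ hK (hM x hx) (hM z hz) (hM _ (add_ne_zero_of_ne hxy))
      (hM _ (add_ne_zero_of_ne hxz)) (hM _ (add_ne_zero_of_ne hyz))
      (hM _ (add_ne_zero_of_ne hxyz)) t₁₂₄ t₁₃₅ t₂₃₆ t₂₅₇ t₁₆₇ t₃₄₇ t₄₅₆
  push Not at hcoinc
  let e₁ : Fin 3 → ZMod 2 := ![1, 0, 0]
  let e₂ : Fin 3 → ZMod 2 := ![0, 1, 0]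
  let e₃ : Fin 3 → ZMod 2 := ![0, 0, 1]
  let pts : List (Fin 3 → ZMod 2) := [e₁, e₂, e₃, e₁ + e₂, e₁ + e₃, e₂ + e₃, e₁ + e₂ + e₃]
  have hpts : ∀ w ∈ pts, w ≠ 0 := by decide
  have hdistinct : (pts.map ρ).Pairwise (· ≠ ·) :=
    List.pairwise_map.2 <| (by decide : pts.Pairwise (· ≠ ·)).imp_of_mem fun ha hb =>
      hcoinc _ _ (hpts _ ha) (hpts _ hb)
  refine Or.inl ⟨_, _, _, _, _, _, _, fun τ hτ => ?_, hdistinct, ?_⟩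
  · obtain ⟨w, hw, rfl⟩ := List.mem_map.1 (show τ ∈ pts.map ρ from hτ)
    exact hM w (hpts w hw)
  · simpa only [FanoPattern, noCommonVertex_iff] using
      hρ.fanoPattern (x := e₁) (y := e₂) (z := e₃) (by decide) (by decide) (by decide)
        (by decide) (by decide) (by decide) (by decide)

theorem exists_isProjectiveFamily_of_condS3 (h : CondS3 m K) :
    ∃ ρ : (Fin 3 → ZMod 2) → Finset (Fin m), IsProjectiveFamily K ρ := by
  rcases h with ⟨τ₁, τ₂, τ₃, τ₄, τ₅, τ₆, τ₇, hM, -, t₁₂₄, t₁₃₅, t₁₆₇, t₂₃₆, t₂₅₇, t₃₄₇, t₄₅₆⟩ |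
    ⟨τ₁, τ₂, τ₃, τ₄, τ₅, τ₆, hM, -, d₁₃, t₁₂₄, t₁₂₅, t₁₄₆, t₁₅₆, t₂₃₆, t₃₄₅⟩ |
    ⟨τ₁, τ₂, τ₃, τ₄, τ₅, hM, -, d₁₂, d₁₅, t₁₃₄, t₂₃₅, t₂₄₅⟩ |
    ⟨τ₁, τ₂, τ₃, τ₄, hM, -, hu, t₂₃₄⟩ |
    ⟨τ₁, τ₂, τ₃, hM, -, d₁₂, d₁₃, d₂₃⟩
  · simp only [← noCommonVertex_iff] at t₁₂₄ t₁₃₅ t₁₆₇ t₂₃₆ t₂₅₇ t₃₄₇ t₄₅₆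
    exact ⟨_, isProjectiveFamily_three_of_fanoPattern hM ⟨t₁₂₄, t₁₃₅, t₁₆₇, t₂₃₆, t₂₅₇, t₃₄₇, t₄₅₆⟩⟩
  · simp only [← noCommonVertex_iff] at t₁₂₄ t₁₂₅ t₁₄₆ t₁₅₆ t₂₃₆ t₃₄₅
    rw [← noCommonVertex_self_iff] at d₁₃
    exact ⟨_, isProjectiveFamily_three_of_fanoPattern (τ₁ := τ₁) (τ₂ := τ₁) (τ₃ := τ₂) (τ₄ := τ₃)
      (τ₅ := τ₄) (τ₆ := τ₅) (τ₇ := τ₆) (by simp only [List.forall_mem_cons] at hM ⊢; tauto)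
      ⟨d₁₃, t₁₂₄, t₁₅₆, t₁₂₅, t₁₄₆, t₂₃₆, t₃₄₅⟩⟩
  · simp only [← noCommonVertex_iff] at t₁₃₄ t₂₃₅ t₂₄₅
    rw [← noCommonVertex_self_iff] at d₁₂ d₁₅
    exact ⟨_, isProjectiveFamily_three_of_fanoPattern (τ₁ := τ₂) (τ₂ := τ₂) (τ₃ := τ₅) (τ₄ := τ₁)
      (τ₅ := τ₃) (τ₆ := τ₄) (τ₇ := τ₅) (by simp only [List.forall_mem_cons] at hM ⊢; tauto)
      ⟨fun _ a _ c => d₁₂ c c a, fun _ a b c => t₂₃₅ a c b, t₂₄₅, fun _ a b c => t₂₄₅ a c b,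
        t₂₃₅, fun _ a b _ => d₁₅ b b a, t₁₃₄⟩⟩
  · simp only [Finset.inter_union_distrib_left, Finset.union_eq_empty,
      ← noCommonVertex_self_iff] at hu
    obtain ⟨⟨d₁₂, d₁₃⟩, d₁₄⟩ := hu
    rw [← noCommonVertex_iff] at t₂₃₄
    exact ⟨_, isProjectiveFamily_three_of_fanoPattern (τ₁ := τ₁) (τ₂ := τ₁) (τ₃ := τ₁) (τ₄ := τ₂)
      (τ₅ := τ₃) (τ₆ := τ₄) (τ₇ := τ₁) (by simp only [List.forall_mem_cons] at hM ⊢; tauto)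
      ⟨d₁₂, d₁₃, fun _ a b _ => d₁₄ a a b, d₁₄, fun _ a b _ => d₁₃ a a b,
        fun _ a b _ => d₁₂ a a b, t₂₃₄⟩⟩
  · rw [← noCommonVertex_self_iff] at d₁₂ d₁₃ d₂₃
    exact ⟨_, isProjectiveFamily_three_of_fanoPattern (τ₁ := τ₁) (τ₂ := τ₁) (τ₃ := τ₁) (τ₄ := τ₂)
      (τ₅ := τ₃) (τ₆ := τ₃) (τ₇ := τ₁) (by simp only [List.forall_mem_cons] at hM ⊢; tauto)
      ⟨d₁₂, d₁₃, fun _ a b _ => d₁₃ a a b, d₁₃, fun _ a b _ => d₁₃ a a b,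
        fun _ a b _ => d₁₂ a a b, fun _ a b _ => d₂₃ a a b⟩⟩

theorem exists_isProjectiveFamily_three_iff (hK : IsSimplicialComplex m K) :
    (∃ ρ : (Fin 3 → ZMod 2) → Finset (Fin m), IsProjectiveFamily K ρ) ↔ CondS3 m K :=
  ⟨fun ⟨_, hρ⟩ => hρ.condS3 hK, exists_isProjectiveFamily_of_condS3⟩

theorem exists_condA_two_iff (hK : IsSimplicialComplex m K) :
    (∃ S : Matrix (Fin m) (Fin 2) ℤ, CondA m 2 K S) ↔ CondS2 m K :=
  (exists_condA_iff_exists_isProjectiveFamily hK (by norm_num)).trans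
    (exists_isProjectiveFamily_two_iff hK)

theorem exists_condA_three_iff (hK : IsSimplicialComplex m K) :
    (∃ S : Matrix (Fin m) (Fin 3) ℤ, CondA m 3 K S) ↔ CondS3 m K :=
  (exists_condA_iff_exists_isProjectiveFamily hK le_rfl).trans
    (exists_isProjectiveFamily_three_iff hK)

end Buchstaber

/-- `s(K) = 2` iff condition (S2) holds and condition (S3) fails. -/
theorem stmt_17 (m : ℕ) (K : Set (Finset (Fin m))) (hK : IsSimplicialComplex m K) :
    ((∃ S : Matrix (Fin m) (Fin 2) ℤ, CondA m 2 K S) ∧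
      ¬(∃ S : Matrix (Fin m) (Fin 3) ℤ, CondA m 3 K S)) ↔
      (CondS2 m K ∧ ¬CondS3 m K) := by
  rw [Buchstaber.exists_condA_two_iff hK, Buchstaber.exists_condA_three_iff hK]
end

section
/- Suppose [m] = ω₁ ∪ ⋯ ∪ ω_l, where each ω_i ⊆ [m] is a non-simplex of K (ω_i ∉ K). Let k = m − (|ω₁| + ⋯ + |ω_l|) + l. If k ≥ 1, then s(K) ≥ k, i.e., there exists an m×k integer matrix satisfying condition (A) for K. In particular, if the ω_i are pairwise disjoint non-simplices covering [m], then s(K) ≥ l. -/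
/-!
Merging two overlapping members `A`, `B` of a family of sets into `A ∪ B` lowers the number of
members by one and the total size by `|A ∩ B| ≥ 1`, so `|⋃ ωᵢ| + #members - ∑ |ωᵢ|`, which is
`m + l - ∑ |ωᵢ| = k` for a cover of `[m]`, never decreases. Once the family is pairwise disjoint this
quantity is its number of members, so at least `k` disjoint non-simplices `τ₁, …, τ_k` remain.
Letting row `i` of `S` be `e_j` for `i ∈ τ_j` (and `0` if `i` lies in none) gives condition (A):
no `τ_j` fits inside a simplex `σ`, so some `i ∈ τ_j ∖ σ` contributes `e_j`.
-/

open Finset Function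

section Merging

variable {ι α : Type*} [DecidableEq ι] [DecidableEq α]

lemma sum_card_update_union_add_one_le {I : Finset ι} {ω : ι → Finset α}
    {i j : ι} (hi : i ∈ I) (hj : j ∈ I) (hij : i ≠ j) (hmeet : ¬Disjoint (ω i) (ω j)) :
    ∑ x ∈ I.erase j, (update ω i (ω i ∪ ω j) x).card + 1 ≤ ∑ x ∈ I, (ω x).card := by
  have hi' : i ∈ I.erase j := mem_erase.mpr ⟨hij, hi⟩
  have hinter : 1 ≤ (ω i ∩ ω j).card := card_pos.mpr (not_disjoint_iff_nonempty_inter.mp hmeet)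
  have hmerge : ∑ x ∈ I.erase j, (update ω i (ω i ∪ ω j) x).card
      = (ω i ∪ ω j).card + ∑ x ∈ (I.erase j).erase i, (ω x).card := by
    rw [← add_sum_erase _ _ hi', update_self]
    congr 1
    exact sum_congr rfl fun x hx => by rw [update_of_ne (ne_of_mem_erase hx)]
  rw [hmerge, ← add_sum_erase _ _ hj, ← add_sum_erase _ _ hi']
  have := card_union_add_card_inter (ω i) (ω j)
  omega

theorem exists_pairwiseDisjoint_superset_family (I : Finset ι) (ω : ι → Finset α) :
    ∃ J ⊆ I, ∃ τ : ι → Finset α, (J : Set ι).PairwiseDisjoint τ ∧ (∀ j ∈ J, ω j ⊆ τ j) ∧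
      (I.biUnion ω).card + I.card ≤ ∑ i ∈ I, (ω i).card + J.card := by
  induction I using Finset.strongInduction generalizing ω with
  | H I ih =>
  by_cases hdisj : (I : Set ι).PairwiseDisjoint ω
  · exact ⟨I, subset_rfl, ω, hdisj, fun _ _ => subset_rfl, by rw [card_biUnion hdisj]⟩
  obtain ⟨i, hi, j, hj, hij, hmeet⟩ : ∃ i ∈ I, ∃ j ∈ I, i ≠ j ∧ ¬Disjoint (ω i) (ω j) := by
    simpa [Set.PairwiseDisjoint, Set.Pairwise] using hdisj
  set ω' := update ω i (ω i ∪ ω j)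
  have hle : ∀ x, ω x ⊆ ω' x := by
    intro x
    rcases eq_or_ne x i with rfl | hx
    · simp [ω']
    · simp [ω', hx]
  have hunion : I.biUnion ω ⊆ (I.erase j).biUnion ω' := by
    intro a ha
    obtain ⟨x, hx, hax⟩ := mem_biUnion.mp ha
    rcases eq_or_ne x j with rfl | hxj
    · exact mem_biUnion.mpr ⟨i, mem_erase.mpr ⟨hij, hi⟩, by simp [ω', hax]⟩
    · exact mem_biUnion.mpr ⟨x, mem_erase.mpr ⟨hxj, hx⟩, hle x hax⟩
  obtain ⟨J, hJ, τ, hτ, hωτ, hcard⟩ := ih (I.erase j) (erase_ssubset hj) ω'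
  refine ⟨J, hJ.trans (erase_subset j I), τ, hτ, fun x hx => (hle x).trans (hωτ x hx), ?_⟩
  have := card_le_card hunion
  have : ∑ x ∈ I.erase j, (ω' x).card + 1 ≤ ∑ x ∈ I, (ω x).card :=
    sum_card_update_union_add_one_le hi hj hij hmeet
  have := card_erase_add_one hj
  omega

end Merging

lemma condA_of_pairwise_disjoint {m k : ℕ} {K : Set (Finset (Fin m))} (hK : IsLowerSet K)
    (τ : Fin k → Finset (Fin m)) (hτ : Pairwise (Disjoint on τ)) (hns : ∀ j, τ j ∉ K) :
    CondA m k K (fun i j => if i ∈ τ j then 1 else 0) := by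
  intro σ hσ
  rw [eq_top_iff, ← (Pi.basisFun ℤ (Fin k)).span_eq, Submodule.span_le]
  rintro _ ⟨j, rfl⟩
  obtain ⟨i, hiτ, hiσ⟩ := not_subset.mp fun h => hns j (hK h hσ)
  have hrow : (fun j' => if i ∈ τ j' then (1 : ℤ) else 0) = Pi.basisFun ℤ (Fin k) j := by
    funext j'
    rcases eq_or_ne j' j with rfl | hj'
    · simp [hiτ]
    · have : i ∉ τ j' := fun h => disjoint_left.mp (hτ hj') h hiτ
      simp [hj', this]
  exact hrow ▸ Submodule.subset_span ⟨i, hiσ, rfl⟩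

theorem stmt_18_general (m l k : ℕ) (K : Set (Finset (Fin m))) (hK : IsSimplicialComplex m K)
    (ω : Fin l → Finset (Fin m)) (hns : ∀ i, ω i ∉ K)
    (hcover : Finset.univ.biUnion ω = Finset.univ)
    (hk : k + (∑ i, (ω i).card) = m + l) :
    ∃ S : Matrix (Fin m) (Fin k) ℤ, CondA m k K S := by
  have hlower : IsLowerSet K := fun σ τ hτσ hσ => hK.2 σ hσ τ hτσ
  obtain ⟨J, -, τ, hτ, hωτ, hcard⟩ := exists_pairwiseDisjoint_superset_family univ ω
  have hkJ : k ≤ J.card := by simp only [hcover, card_univ, Fintype.card_fin] at hcard; omega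
  let e : Fin k ↪ Fin l := (Fin.castLEEmb hkJ).trans (J.orderEmbOfFin rfl).toEmbedding
  have he : ∀ j, e j ∈ J := fun j => J.orderEmbOfFin_mem rfl _
  refine ⟨_, condA_of_pairwise_disjoint hlower (τ ∘ e) ?_ ?_⟩
  · exact fun a b hab => hτ (he a) (he b) (e.injective.ne hab)
  · exact fun j hj => hns (e j) (hlower (hωτ _ (he j)) hj)

/-- If `[m] = ω₁ ∪ ⋯ ∪ ω_l` where each `ωᵢ` is a non-simplex of `K`, and
`k = m - (|ω₁| + ⋯ + |ω_l|) + l ≥ 1`, then `s(K) ≥ k`; in particular, if the `ωᵢ` are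
pairwise disjoint non-simplices covering `[m]`, then `s(K) ≥ l`. -/
theorem stmt_18 (m l k : ℕ) (K : Set (Finset (Fin m))) (hK : IsSimplicialComplex m K)
    (ω : Fin l → Finset (Fin m)) (hns : ∀ i, ω i ∉ K)
    (hcover : Finset.univ.biUnion ω = Finset.univ)
    (hk : k + (∑ i, (ω i).card) = m + l) (hk1 : 1 ≤ k) :
    ∃ S : Matrix (Fin m) (Fin k) ℤ, CondA m k K S :=
  stmt_18_general m l k K hK ω hns hcover hk
end
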